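/- arXiv:1802.03020 — 4 statements merged into one kernel-verified Lean document; each statement's English description precedes it below -/
import Mathlib

section
/- Let Φ₁, Φ₂ : ℝ → ℝ be smooth functions with Φ₁'² and Φ₂'² integrable, satisfying Φ₁'(ρ)² Φ₂'(σ)² < 1 for all (ρ,σ) ∈ ℝ². Then the map Ψ(ρ,σ) = (ρ - ∫_{-∞}^σ Φ₂'(x)² dx, σ + ∫_ρ^∞ Φ₁'(x)² dx) is injective on ℝ². -/
open MeasureTheory

/-- The Barbashov–Chernikov map Ψ(ρ,σ) = (ρ - ∫_{-∞}^σ Φ₂'(x)² dx, σ + ∫_ρ^∞ Φ₁'(x)² dx). -/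
noncomputable def PsiBC (Φ₁ Φ₂ : ℝ → ℝ) (p : ℝ × ℝ) : ℝ × ℝ :=
  (p.1 - ∫ x in Set.Iic p.2, (deriv Φ₂ x) ^ 2,
   p.2 + ∫ x in Set.Ici p.1, (deriv Φ₁ x) ^ 2)

lemma ici_sub_ici (f : ℝ → ℝ) (hi : Integrable f) (a b : ℝ) :
    (∫ x in Set.Ici a, f x) - ∫ x in Set.Ici b, f x = ∫ x in a..b, f x := by
  have h1 := intervalIntegral.integral_Iio_add_Ici (b := a) hi.integrableOn hi.integrableOn
  have h2 := intervalIntegral.integral_Iio_add_Ici (b := b) hi.integrableOn hi.integrableOn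
  have h3 := intervalIntegral.integral_Iic_sub_Iic (a := a) (b := b)
    hi.integrableOn hi.integrableOn
  rw [integral_Iic_eq_integral_Iio, integral_Iic_eq_integral_Iio] at h3
  linarith

lemma psiBC_eq_case (Φ₁ Φ₂ : ℝ → ℝ) (hΦ₁ : ContDiff ℝ (⊤ : ℕ∞) Φ₁) (hΦ₂ : ContDiff ℝ (⊤ : ℕ∞) Φ₂)
    (hi₁ : Integrable (fun x => (deriv Φ₁ x) ^ 2))
    (hi₂ : Integrable (fun x => (deriv Φ₂ x) ^ 2))
    (hsmall : ∀ ρ σ : ℝ, (deriv Φ₁ ρ) ^ 2 * (deriv Φ₂ σ) ^ 2 < 1)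
    (p q : ℝ × ℝ) (hle : q.1 ≤ p.1) (h : PsiBC Φ₁ Φ₂ p = PsiBC Φ₁ Φ₂ q) : p = q := by
  set f₁ : ℝ → ℝ := fun x => (deriv Φ₁ x) ^ 2 with hf₁
  set f₂ : ℝ → ℝ := fun x => (deriv Φ₂ x) ^ 2 with hf₂
  have hc₁ : Continuous f₁ := ((hΦ₁.continuous_deriv (by simp)).pow 2)
  have hc₂ : Continuous f₂ := ((hΦ₂.continuous_deriv (by simp)).pow 2)
  have hnn₁ : ∀ x, 0 ≤ f₁ x := fun x => sq_nonneg _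
  have hnn₂ : ∀ x, 0 ≤ f₂ x := fun x => sq_nonneg _
  have h1 : p.1 - q.1 = ∫ x in q.2..p.2, f₂ x := by
    have := congrArg Prod.fst h
    simp only [PsiBC] at this
    have hiic := intervalIntegral.integral_Iic_sub_Iic (a := q.2) (b := p.2)
      (f := f₂) hi₂.integrableOn hi₂.integrableOn
    linarith
  have h2 : p.2 - q.2 = ∫ x in q.1..p.1, f₁ x := by
    have := congrArg Prod.snd h
    simp only [PsiBC] at this
    have hici := ici_sub_ici f₁ hi₁ q.1 p.1
    linarith
  have hb : 0 ≤ p.2 - q.2 := by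
    rw [h2]; exact intervalIntegral.integral_nonneg hle (fun x _ => hnn₁ x)
  have hle2 : q.2 ≤ p.2 := by linarith
  -- extract maxima
  obtain ⟨ρ₀, hρ₀mem, hρ₀⟩ := (isCompact_Icc (a := q.1) (b := p.1)).exists_isMaxOn
    (Set.nonempty_Icc.2 hle) (hc₁.continuousOn)
  obtain ⟨σ₀, hσ₀mem, hσ₀⟩ := (isCompact_Icc (a := q.2) (b := p.2)).exists_isMaxOn
    (Set.nonempty_Icc.2 hle2) (hc₂.continuousOn)
  have hM₁ : 0 ≤ f₁ ρ₀ := hnn₁ _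
  have hM₂ : 0 ≤ f₂ σ₀ := hnn₂ _
  have hbd1 : p.1 - q.1 ≤ (p.2 - q.2) * f₂ σ₀ := by
    rw [h1]
    calc ∫ x in q.2..p.2, f₂ x ≤ ∫ _ in q.2..p.2, f₂ σ₀ := by
          apply intervalIntegral.integral_mono_on hle2
            (hc₂.intervalIntegrable _ _) intervalIntegrable_const
          exact fun x hx => hσ₀ hx
      _ = (p.2 - q.2) * f₂ σ₀ := by simp [mul_comm]
  have hbd2 : p.2 - q.2 ≤ (p.1 - q.1) * f₁ ρ₀ := by
    rw [h2]
    calc ∫ x in q.1..p.1, f₁ x ≤ ∫ _ in q.1..p.1, f₁ ρ₀ := by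
          apply intervalIntegral.integral_mono_on hle
            (hc₁.intervalIntegrable _ _) intervalIntegrable_const
          exact fun x hx => hρ₀ hx
      _ = (p.1 - q.1) * f₁ ρ₀ := by simp [mul_comm]
  have hsm := hsmall ρ₀ σ₀
  have hsm' : f₁ ρ₀ * f₂ σ₀ < 1 := hsm
  have ha0 : p.1 - q.1 = 0 := by
    by_contra hne
    have ha : 0 < p.1 - q.1 := lt_of_le_of_ne (by linarith) (Ne.symm hne)
    have h3 : p.1 - q.1 ≤ (p.1 - q.1) * (f₁ ρ₀ * f₂ σ₀) := by nlinarith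
    have h4 := mul_lt_mul_of_pos_left hsm' ha
    nlinarith
  have hb0 : p.2 - q.2 = 0 := by nlinarith
  have := Prod.ext (by linarith : p.1 = q.1) (by linarith : p.2 = q.2)
  exact this

/-- If Φ₁'(ρ)²Φ₂'(σ)² < 1 everywhere, then Ψ is injective on ℝ². -/
theorem psiBC_injective (Φ₁ Φ₂ : ℝ → ℝ) (hΦ₁ : ContDiff ℝ (⊤ : ℕ∞) Φ₁) (hΦ₂ : ContDiff ℝ (⊤ : ℕ∞) Φ₂)
    (hi₁ : Integrable (fun x => (deriv Φ₁ x) ^ 2))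
    (hi₂ : Integrable (fun x => (deriv Φ₂ x) ^ 2))
    (hsmall : ∀ ρ σ : ℝ, (deriv Φ₁ ρ) ^ 2 * (deriv Φ₂ σ) ^ 2 < 1) :
    Function.Injective (PsiBC Φ₁ Φ₂) := by
  intro p q h
  rcases le_total q.1 p.1 with hle | hle
  · exact psiBC_eq_case Φ₁ Φ₂ hΦ₁ hΦ₂ hi₁ hi₂ hsmall p q hle h
  · exact (psiBC_eq_case Φ₁ Φ₂ hΦ₁ hΦ₂ hi₁ hi₂ hsmall q p hle h.symm).symm
end

section
/- Let Φ₁, Φ₂ : ℝ → ℝ be smooth with square-integrable derivatives and suppose (ρ₁,σ₁) ≠ (ρ₂,σ₂) satisfy Ψ(ρ₁,σ₁) = Ψ(ρ₂,σ₂), where Ψ(ρ,σ) = (ρ - ∫_{-∞}^σ Φ₂'(x)² dx, σ + ∫_ρ^∞ Φ₁'(x)² dx). Then δρ := ρ₂ - ρ₁ and δσ := σ₂ - σ₁ are both nonzero and δρ · δσ > 0. -/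
open MeasureTheory

/-- Two distinct points of the (ρ,σ) plane mapping to the same point of Minkowski space have
coordinate differences δρ, δσ both nonzero and of the same sign: δρ·δσ > 0. -/
theorem psiBC_same_image_sign (Φ₁ Φ₂ : ℝ → ℝ) (hΦ₁ : ContDiff ℝ (⊤ : ℕ∞) Φ₁) (hΦ₂ : ContDiff ℝ (⊤ : ℕ∞) Φ₂)
    (hi₁ : Integrable (fun x => (deriv Φ₁ x) ^ 2))
    (hi₂ : Integrable (fun x => (deriv Φ₂ x) ^ 2))
    (ρ₁ σ₁ ρ₂ σ₂ : ℝ) (hne : (ρ₁, σ₁) ≠ (ρ₂, σ₂))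
    (heq : PsiBC Φ₁ Φ₂ (ρ₁, σ₁) = PsiBC Φ₁ Φ₂ (ρ₂, σ₂)) :
    ρ₂ - ρ₁ ≠ 0 ∧ σ₂ - σ₁ ≠ 0 ∧ (ρ₂ - ρ₁) * (σ₂ - σ₁) > 0 := by
  set F : ℝ → ℝ := fun σ => ∫ x in Set.Iic σ, (deriv Φ₂ x) ^ 2 with hF
  set G : ℝ → ℝ := fun ρ => ∫ x in Set.Ici ρ, (deriv Φ₁ x) ^ 2 with hG
  have h1 : ρ₁ - F σ₁ = ρ₂ - F σ₂ := congrArg Prod.fst heq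
  have h2 : σ₁ + G ρ₁ = σ₂ + G ρ₂ := congrArg Prod.snd heq
  have hFmono : Monotone F := by
    intro a b hab
    exact setIntegral_mono_set hi₂.integrableOn
      (Filter.Eventually.of_forall fun x => sq_nonneg _)
      ((Set.Iic_subset_Iic.2 hab).eventuallyLE)
  have hGanti : Antitone G := by
    intro a b hab
    exact setIntegral_mono_set hi₁.integrableOn
      (Filter.Eventually.of_forall fun x => sq_nonneg _)
      ((Set.Ici_subset_Ici.2 hab).eventuallyLE)
  have hδρ : ρ₂ - ρ₁ = F σ₂ - F σ₁ := by linarith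
  have hδσ : σ₂ - σ₁ = G ρ₁ - G ρ₂ := by linarith
  have hσne : σ₂ - σ₁ ≠ 0 := by
    intro h
    have hσ : σ₁ = σ₂ := by linarith
    have hρ : ρ₁ = ρ₂ := by rw [hσ] at h1; linarith
    exact hne (by rw [hσ, hρ])
  have hρne : ρ₂ - ρ₁ ≠ 0 := by
    intro h
    have hρ : ρ₁ = ρ₂ := by linarith
    have hσ : σ₁ = σ₂ := by rw [hρ] at h2; linarith
    exact hne (by rw [hσ, hρ])
  refine ⟨hρne, hσne, ?_⟩
  rcases lt_or_gt_of_ne hσne with h | h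
  · -- σ₂ < σ₁, so F σ₂ ≤ F σ₁, δρ ≤ 0
    have := hFmono (le_of_lt (by linarith : σ₂ < σ₁))
    have hρneg : ρ₂ - ρ₁ < 0 := lt_of_le_of_ne (by linarith) hρne
    exact mul_pos_of_neg_of_neg hρneg (by linarith)
  · have := hFmono (le_of_lt (by linarith : σ₁ < σ₂))
    have hρpos : ρ₂ - ρ₁ > 0 := lt_of_le_of_ne (by linarith) (Ne.symm hρne)
    exact mul_pos hρpos (by linarith)
end

section
/- For the superluminal (c = -1) 2d Born-Infeld effective metric g_{μν} = m_{μν} - ∂_μΦ ∂_νΦ with m = diag(-1,1), any vector V that is causal with respect to m is causal with respect to g. -/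
open Matrix BigOperators

/-- Superluminal (c = -1) 2d Born-Infeld: any vector causal w.r.t. the Minkowski metric
m = diag(-1,1) is causal w.r.t. the effective metric g_{μν} = m_{μν} - ∂_μΦ ∂_νΦ. -/
theorem BI_superluminal_causal (Φ : (Fin 2 → ℝ) → ℝ) (hΦ : ContDiff ℝ (⊤ : ℕ∞) Φ) (x : Fin 2 → ℝ)
    (hLor : 1 - (-(fderiv ℝ Φ x (Pi.single 0 1)) ^ 2 + (fderiv ℝ Φ x (Pi.single 1 1)) ^ 2) > 0)
    (V : Fin 2 → ℝ)
    (hcausal : ∑ μ, ∑ ν, (!![-1, 0; 0, 1] : Matrix (Fin 2) (Fin 2) ℝ) μ ν * V μ * V ν ≤ 0) :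
    ∑ μ, ∑ ν,
        ((!![-1, 0; 0, 1] : Matrix (Fin 2) (Fin 2) ℝ) μ ν -
          fderiv ℝ Φ x (Pi.single μ 1) * fderiv ℝ Φ x (Pi.single ν 1)) * V μ * V ν ≤ 0 := by
  simp only [Fin.sum_univ_two, Matrix.cons_val', Matrix.cons_val_zero, Matrix.cons_val_one,
    Matrix.head_cons, Matrix.empty_val', Matrix.cons_val_fin_one, Matrix.head_fin_const] at hcausal ⊢
  nlinarith [sq_nonneg (fderiv ℝ Φ x (Pi.single 0 1) * V 0 + fderiv ℝ Φ x (Pi.single 1 1) * V 1)]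
end

section
/- Suppose Φ₁'(ρ)² Φ₂'(σ)² < 1 for all (ρ,σ) and that Φ₁', Φ₂' vanish at infinity sufficiently rapidly (e.g. compactly supported). Then for every η the function ρ ↦ F(ρ,η) = ρ - ∫_{-∞}^{G(ρ,η)} Φ₂'(x)² dx is strictly increasing and tends to ±∞ as ρ → ±∞; hence for each (ξ,η) there is exactly one solution ρ of ξ = F(ρ,η), and the map Ψ is a bijection of ℝ² onto ℝ². -/
open MeasureTheory Filter

/-- G(ρ,η) = η - ∫_ρ^∞ Φ₁'(x)² dx. -/
noncomputable def GBC (Φ₁ : ℝ → ℝ) (ρ η : ℝ) : ℝ :=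
  η - ∫ x in Set.Ici ρ, (deriv Φ₁ x) ^ 2

/-- F(ρ,η) = ρ - ∫_{-∞}^{G(ρ,η)} Φ₂'(x)² dx. -/
noncomputable def FBC (Φ₁ Φ₂ : ℝ → ℝ) (ρ η : ℝ) : ℝ :=
  ρ - ∫ x in Set.Iic (GBC Φ₁ ρ η), (deriv Φ₂ x) ^ 2

/-- Integral over `Ici` differences. -/
lemma auxBC_Ici_sub {f : ℝ → ℝ} (hf : Integrable f) (a b : ℝ) :
    (∫ x in Set.Ici a, f x) - ∫ x in Set.Ici b, f x = ∫ x in a..b, f x := by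
  have h : ∀ c : ℝ, (∫ x in Set.Ici c, f x) = (∫ x, f x) - ∫ x in Set.Iic c, f x := by
    intro c
    have := intervalIntegral.integral_Iio_add_Ici (b := c) hf.integrableOn hf.integrableOn
    rw [MeasureTheory.integral_Iic_eq_integral_Iio]
    linarith
  rw [h a, h b]
  have := intervalIntegral.integral_Iic_sub_Iic (a := a) (b := b)
    (hf.integrableOn (s := Set.Iic a)) (hf.integrableOn (s := Set.Iic b))
  linarith

/-- Interval integral bound for a nonneg function bounded by `M`. -/
lemma auxBC_bound {f : ℝ → ℝ} (hf : Integrable f) {M : ℝ}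
    (h0 : ∀ x, 0 ≤ f x) (hM : ∀ x, f x ≤ M) {a b : ℝ} (hab : a ≤ b) :
    0 ≤ (∫ x in a..b, f x) ∧ (∫ x in a..b, f x) ≤ M * (b - a) := by
  constructor
  · exact intervalIntegral.integral_nonneg hab (fun x _ => h0 x)
  · calc (∫ x in a..b, f x) ≤ ∫ _ in a..b, M := by
          apply intervalIntegral.integral_mono_on hab hf.intervalIntegrable
            intervalIntegrable_const (fun x _ => hM x)
        _ = M * (b - a) := by simp [mul_comm]

/-- If Φ₁'(ρ)²Φ₂'(σ)² < 1 everywhere and Φ₁', Φ₂' are compactly supported, then for each η the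
map ρ ↦ F(ρ,η) is strictly increasing and tends to ±∞ as ρ → ±∞; hence for each (ξ,η) there is
exactly one ρ with F(ρ,η) = ξ, and Ψ is a bijection of ℝ² onto ℝ². -/
theorem FBC_strictMono_bijective (Φ₁ Φ₂ : ℝ → ℝ)
    (hΦ₁ : ContDiff ℝ (⊤ : ℕ∞) Φ₁) (hΦ₂ : ContDiff ℝ (⊤ : ℕ∞) Φ₂)
    (hc₁ : HasCompactSupport (deriv Φ₁)) (hc₂ : HasCompactSupport (deriv Φ₂))
    (hsmall : ∀ ρ σ : ℝ, (deriv Φ₁ ρ) ^ 2 * (deriv Φ₂ σ) ^ 2 < 1) :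
    (∀ η : ℝ, StrictMono (fun ρ => FBC Φ₁ Φ₂ ρ η)) ∧
    (∀ η : ℝ, Tendsto (fun ρ => FBC Φ₁ Φ₂ ρ η) atTop atTop) ∧
    (∀ η : ℝ, Tendsto (fun ρ => FBC Φ₁ Φ₂ ρ η) atBot atBot) ∧
    (∀ ξ η : ℝ, ∃! ρ : ℝ, FBC Φ₁ Φ₂ ρ η = ξ) ∧
    Function.Bijective (PsiBC Φ₁ Φ₂) := by
  have hf₁c : Continuous fun x => (deriv Φ₁ x) ^ 2 := (hΦ₁.continuous_deriv (by simp)).pow 2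
  have hf₂c : Continuous fun x => (deriv Φ₂ x) ^ 2 := (hΦ₂.continuous_deriv (by simp)).pow 2
  have hcs₁ : HasCompactSupport fun x => (deriv Φ₁ x) ^ 2 := by
    have h : (fun x => (deriv Φ₁ x) ^ 2) = deriv Φ₁ * deriv Φ₁ := by
      funext x; simp [Pi.mul_apply, sq]
    rw [h]; exact hc₁.mul_right
  have hcs₂ : HasCompactSupport fun x => (deriv Φ₂ x) ^ 2 := by
    have h : (fun x => (deriv Φ₂ x) ^ 2) = deriv Φ₂ * deriv Φ₂ := by
      funext x; simp [Pi.mul_apply, sq]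
    rw [h]; exact hc₂.mul_right
  have hi₁ : Integrable fun x => (deriv Φ₁ x) ^ 2 := hf₁c.integrable_of_hasCompactSupport hcs₁
  have hi₂ : Integrable fun x => (deriv Φ₂ x) ^ 2 := hf₂c.integrable_of_hasCompactSupport hcs₂
  obtain ⟨x₀, hx₀⟩ := hf₁c.exists_forall_ge_of_hasCompactSupport hcs₁
  obtain ⟨y₀, hy₀⟩ := hf₂c.exists_forall_ge_of_hasCompactSupport hcs₂
  set M₁ : ℝ := (deriv Φ₁ x₀) ^ 2 with hM₁def
  set M₂ : ℝ := (deriv Φ₂ y₀) ^ 2 with hM₂def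
  have hM₁0 : 0 ≤ M₁ := sq_nonneg _
  have hM₂0 : 0 ≤ M₂ := sq_nonneg _
  have hM : M₁ * M₂ < 1 := hsmall x₀ y₀
  have hcpos : 0 < 1 - M₁ * M₂ := by linarith
  -- the key uniform lower bound on increments of F
  have key : ∀ η ρ₁ ρ₂ : ℝ, ρ₁ ≤ ρ₂ →
      (1 - M₁ * M₂) * (ρ₂ - ρ₁) ≤ FBC Φ₁ Φ₂ ρ₂ η - FBC Φ₁ Φ₂ ρ₁ η := by
    intro η ρ₁ ρ₂ h12
    set G₁ := GBC Φ₁ ρ₁ η with hG₁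
    set G₂ := GBC Φ₁ ρ₂ η with hG₂
    have hGdiff : G₂ - G₁ = ∫ x in ρ₁..ρ₂, (deriv Φ₁ x) ^ 2 := by
      rw [hG₁, hG₂]
      have := auxBC_Ici_sub hi₁ ρ₁ ρ₂
      simp only [GBC]
      linarith
    have hGbd := auxBC_bound hi₁ (fun x => sq_nonneg _) (fun x => hx₀ x) h12
    have hG12 : G₁ ≤ G₂ := by linarith [hGbd.1, hGdiff.symm ▸ hGbd.1]
    have hGle : G₂ - G₁ ≤ M₁ * (ρ₂ - ρ₁) := by rw [hGdiff]; exact hGbd.2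
    have hFdiff : FBC Φ₁ Φ₂ ρ₂ η - FBC Φ₁ Φ₂ ρ₁ η
        = (ρ₂ - ρ₁) - ∫ x in G₁..G₂, (deriv Φ₂ x) ^ 2 := by
      simp only [FBC, ← hG₁, ← hG₂]
      have := intervalIntegral.integral_Iic_sub_Iic (a := G₁) (b := G₂)
        (hi₂.integrableOn (s := Set.Iic G₁)) (hi₂.integrableOn (s := Set.Iic G₂))
      linarith
    have hHbd := auxBC_bound hi₂ (fun x => sq_nonneg _) (fun x => hy₀ x) hG12
    have h1 : (∫ x in G₁..G₂, (deriv Φ₂ x) ^ 2) ≤ M₂ * (G₂ - G₁) := hHbd.2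
    have h2 : M₂ * (G₂ - G₁) ≤ M₂ * (M₁ * (ρ₂ - ρ₁)) := mul_le_mul_of_nonneg_left hGle hM₂0
    rw [hFdiff]
    nlinarith
  -- strict monotonicity
  have hmono : ∀ η : ℝ, StrictMono (fun ρ => FBC Φ₁ Φ₂ ρ η) := by
    intro η a b hab
    have := key η a b hab.le
    simp only
    nlinarith
  -- continuity of primitives
  have hH₂cont : Continuous fun σ => ∫ x in Set.Iic σ, (deriv Φ₂ x) ^ 2 := by
    have h : (fun σ => ∫ x in Set.Iic σ, (deriv Φ₂ x) ^ 2)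
        = fun σ => (∫ x in Set.Iic (0:ℝ), (deriv Φ₂ x) ^ 2) + ∫ x in (0:ℝ)..σ, (deriv Φ₂ x) ^ 2 := by
      funext σ
      have := intervalIntegral.integral_Iic_sub_Iic (a := (0:ℝ)) (b := σ)
        (hi₂.integrableOn (s := Set.Iic 0)) (hi₂.integrableOn (s := Set.Iic σ))
      linarith
    rw [h]
    exact continuous_const.add (hi₂.continuous_primitive 0)
  have hH₁cont : Continuous fun ρ => ∫ x in Set.Ici ρ, (deriv Φ₁ x) ^ 2 := by
    have h : (fun ρ => ∫ x in Set.Ici ρ, (deriv Φ₁ x) ^ 2)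
        = fun ρ => (∫ x in Set.Ici (0:ℝ), (deriv Φ₁ x) ^ 2) - ∫ x in (0:ℝ)..ρ, (deriv Φ₁ x) ^ 2 := by
      funext ρ
      have := auxBC_Ici_sub hi₁ 0 ρ
      linarith
    rw [h]
    exact continuous_const.sub (hi₁.continuous_primitive 0)
  have hFcont : ∀ η : ℝ, Continuous fun ρ => FBC Φ₁ Φ₂ ρ η := by
    intro η
    simp only [FBC, GBC]
    exact continuous_id.sub (hH₂cont.comp (continuous_const.sub hH₁cont))
  -- tendsto atTop and atBot
  have htop : ∀ η : ℝ, Tendsto (fun ρ => FBC Φ₁ Φ₂ ρ η) atTop atTop := by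
    intro η
    have haff : Tendsto (fun ρ : ℝ => FBC Φ₁ Φ₂ 0 η + (1 - M₁ * M₂) * ρ) atTop atTop :=
      tendsto_atTop_add_const_left _ _ ((tendsto_const_mul_atTop_of_pos hcpos).2 tendsto_id)
    apply tendsto_atTop_mono' atTop ?_ haff
    filter_upwards [eventually_ge_atTop (0:ℝ)] with ρ hρ
    have := key η 0 ρ hρ
    linarith
  have hbot : ∀ η : ℝ, Tendsto (fun ρ => FBC Φ₁ Φ₂ ρ η) atBot atBot := by
    intro η
    have haff : Tendsto (fun ρ : ℝ => FBC Φ₁ Φ₂ 0 η + (1 - M₁ * M₂) * ρ) atBot atBot :=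
      tendsto_atBot_add_const_left _ _ ((tendsto_const_mul_atBot_of_pos hcpos).2 tendsto_id)
    apply tendsto_atBot_mono' atBot ?_ haff
    filter_upwards [eventually_le_atBot (0:ℝ)] with ρ hρ
    have := key η ρ 0 hρ
    linarith
  -- unique solvability
  have hexu : ∀ ξ η : ℝ, ∃! ρ : ℝ, FBC Φ₁ Φ₂ ρ η = ξ := by
    intro ξ η
    obtain ⟨ρ, hρ⟩ := (hFcont η).surjective (htop η) (hbot η) ξ
    exact ⟨ρ, hρ, fun y hy => (hmono η).injective (hy.trans hρ.symm)⟩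
  refine ⟨hmono, htop, hbot, hexu, ?_, ?_⟩
  · -- injectivity of Ψ
    intro p q h
    have h1 : p.1 - (∫ x in Set.Iic p.2, (deriv Φ₂ x) ^ 2)
        = q.1 - ∫ x in Set.Iic q.2, (deriv Φ₂ x) ^ 2 := congrArg Prod.fst h
    have h2 : p.2 + (∫ x in Set.Ici p.1, (deriv Φ₁ x) ^ 2)
        = q.2 + ∫ x in Set.Ici q.1, (deriv Φ₁ x) ^ 2 := congrArg Prod.snd h
    set η := p.2 + ∫ x in Set.Ici p.1, (deriv Φ₁ x) ^ 2 with hη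
    have hGp : GBC Φ₁ p.1 η = p.2 := by simp only [GBC, hη]; ring
    have hGq : GBC Φ₁ q.1 η = q.2 := by simp only [GBC]; rw [h2]; ring
    have hF : FBC Φ₁ Φ₂ p.1 η = FBC Φ₁ Φ₂ q.1 η := by
      simp only [FBC, hGp, hGq]; exact h1
    have hp1 : p.1 = q.1 := (hmono η).injective hF
    exact Prod.ext hp1 (by rw [← hGp, ← hGq, hp1])
  · -- surjectivity of Ψ
    rintro ⟨ξ, η⟩
    obtain ⟨ρ, hρ, -⟩ := hexu ξ η
    refine ⟨(ρ, GBC Φ₁ ρ η), Prod.ext ?_ ?_⟩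
    · simpa only [PsiBC, FBC] using hρ
    · simp only [PsiBC, GBC]; ring
end
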